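/- arXiv:0902.4246 — 5 statements merged into one kernel-verified Lean document; each statement's English description precedes it below -/
import Mathlib

section
/- For ν ≥ 1, the number A_n^ν of (d,k,r)-constrained binary sequences of length n and weight ν beginning with a one is given by A_n^ν = Σ_{j=0}^{ν-1} (-1)^j C(ν-1, j) [ C(n-1-(ν-1)d - j(k-d+1), ν-1) - C(n-1-(r+1)-(ν-1)d - j(k-d+1), ν-1) ], where C(a,b) denotes the binomial coefficient and C(a,b) = 0 whenever a < b. -/
/-- Weight of a binary sequence: number of ones. -/
def wt (l : List Bool) : ℕ := l.count true

/-- Length of the leading run of zeros. -/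
def leadZeros (l : List Bool) : ℕ := (l.takeWhile (fun b => !b)).length

/-- Length of the trailing run of zeros. -/
def trailZeros (l : List Bool) : ℕ := (l.reverse.takeWhile (fun b => !b)).length

/-- Every internal run of zeros (between two consecutive ones) has length in `[d, k]`. -/
def internalOK (d k : ℕ) (l : List Bool) : Prop :=
  ∀ i j : ℕ, i < j → j < l.length → l.getD i false = true → l.getD j false = true →
    (∀ m, i < m → m < j → l.getD m false = false) →
    d ≤ j - i - 1 ∧ j - i - 1 ≤ k

/-- NRZI charge accumulator: current bipolar level `z`, remaining bits. -/
def chargeAux : ℤ → List Bool → ℤ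
  | _, [] => 0
  | z, b :: t => (if b then -z else z) + chargeAux (if b then -z else z) t

/-- NRZI charge (digital sum) of a binary sequence. -/
def charge (l : List Bool) : ℤ := chargeAux 1 l

/-- Number of (d,k,r)-sequences of length n and weight ν beginning with a one
(the empty sequence is allowed, giving `A 0 0 = 1`). -/
noncomputable def Adkr (d k r n ν : ℕ) : ℕ :=
  Nat.card {l : List Bool // l.length = n ∧ (l ≠ [] → l.head? = some true) ∧
    internalOK d k l ∧ trailZeros l ≤ r ∧ wt l = ν}

/-- Number of (d,k,l,r)-sequences of length n and weight ν. -/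
noncomputable def Adklr (d k L r n ν : ℕ) : ℕ :=
  Nat.card {x : List Bool // x.length = n ∧ leadZeros x ≤ L ∧
    internalOK d k x ∧ trailZeros x ≤ r ∧ wt x = ν}

/-- Number of (d,k,r)-sequences of length n beginning with a one, with NRZI charge σ. -/
noncomputable def Cdkr (d k r n : ℕ) (σ : ℤ) : ℕ :=
  Nat.card {l : List Bool // l.length = n ∧ (l ≠ [] → l.head? = some true) ∧
    internalOK d k l ∧ trailZeros l ≤ r ∧ charge l = σ}

/-- Number of (d,k,l,r)-sequences of length n with NRZI charge σ. -/
noncomputable def Cdklr (d k L r n : ℕ) (σ : ℤ) : ℕ :=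
  Nat.card {x : List Bool // x.length = n ∧ leadZeros x ≤ L ∧
    internalOK d k x ∧ trailZeros x ≤ r ∧ charge x = σ}

/-- Binomial coefficient with integer upper argument; zero when the upper argument is negative. -/
def ibin (a : ℤ) (b : ℕ) : ℤ := if 0 ≤ a then (a.toNat.choose b : ℤ) else 0

/-!
Cutting a sequence that begins with a one just before each of its ones writes it uniquely as
`1 0^{g₁} 1 0^{g₂} ⋯ 1 0^{g_{ν-1}} 1 0^t`, so the (d,k,r)-sequences of weight `ν` correspond
to the gap vectors `g ∈ [d,k]^{ν-1}` and trailing runs `t ≤ r` with `ν + ∑ gᵢ + t = n`.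
Hence `A_n^ν` is the coefficient of `x^n` in
  `x^ν (x^d + ⋯ + x^k)^{ν-1} (1 + ⋯ + x^r)`
  `  = x^{ν+(ν-1)d} (1 - x^q)^{ν-1} (1 - x^{r+1}) / (1 - x)^ν`,
and expanding `(1 - x^q)^{ν-1}` binomially together with
`[x^s] (1 - x)^{-ν} = C(s+ν-1, ν-1)` gives the formula.
-/

namespace DkrSeq

open Finset PowerSeries

section Gaps

variable {d k : ℕ}

theorem internalOK_nil : internalOK d k [] := fun _ _ _ hj => absurd hj (Nat.not_lt_zero _)

theorem internalOK_cons (b : Bool) (l : List Bool) :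
    internalOK d k (b :: l) ↔ internalOK d k l ∧
      (b = true → ∀ p, l.getD p false = true → (∀ m < p, l.getD m false = false) →
        d ≤ p ∧ p ≤ k) := by
  constructor
  · intro h
    refine ⟨fun i j hij hj hi hj' hmid => ?_, fun hb p hp hbefore => ?_⟩
    · have := h (i + 1) (j + 1) (by omega) (by simpa) (by simpa) (by simpa) fun m h₁ h₂ => by
        obtain ⟨m, rfl⟩ : ∃ m', m = m' + 1 := ⟨m - 1, by omega⟩
        simpa using hmid m (by omega) (by omega)
      omega
    · have hpl : p < l.length := by
        by_contra hpl
        rw [List.getD_eq_default _ _ (by omega)] at hp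
        exact Bool.false_ne_true hp
      have := h 0 (p + 1) (by omega) (by simpa) (by simpa) (by simpa) fun m h₁ h₂ => by
        obtain ⟨m, rfl⟩ : ∃ m', m = m' + 1 := ⟨m - 1, by omega⟩
        simpa using hbefore m (by omega)
      omega
  · rintro ⟨hl, hfirst⟩ i j hij hj hi hj' hmid
    obtain ⟨j, rfl⟩ := Nat.exists_eq_add_of_lt hij
    rcases i with _ | i
    · have := hfirst (by simpa using hi) j (by simpa using hj') fun m hm => by
        simpa using hmid (m + 1) (by omega) (by omega)
      omega
    · have := hl i (i + j + 1) (by omega) (by simp at hj; omega) (by simpa using hi)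
        (by simpa [add_right_comm] using hj') fun m h₁ h₂ => by
          simpa using hmid (m + 1) (by omega) (by omega)
      omega

theorem internalOK_replicate_false_append (g : ℕ) (l : List Bool) :
    internalOK d k (List.replicate g false ++ l) ↔ internalOK d k l := by
  induction g with
  | zero => rfl
  | succ g ih => simp [List.replicate_succ, internalOK_cons, ih]

theorem getD_replicate_false_append (g p : ℕ) (l : List Bool) :
    (List.replicate g false ++ l).getD p false = if p < g then false else l.getD (p - g) false := by
  split_ifs with hp
  · rw [List.getD_append _ _ _ _ (by simpa), List.getD_replicate _ hp]
  · rw [List.getD_append_right _ _ _ _ (by simpa using hp), List.length_replicate]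

theorem internalOK_true_cons_replicate_append {g : ℕ} {l : List Bool}
    (hl : l.head? = some true) :
    internalOK d k (true :: (List.replicate g false ++ l)) ↔
      (d ≤ g ∧ g ≤ k) ∧ internalOK d k l := by
  obtain ⟨l, rfl⟩ := List.head?_eq_some_iff.mp hl
  simp only [internalOK_cons, internalOK_replicate_false_append, getD_replicate_false_append,
    forall_const]
  constructor
  · rintro ⟨hl, hfirst⟩
    exact ⟨hfirst g (by simp) fun m hm => by simp [hm], hl⟩
  · rintro ⟨hg, hl⟩
    refine ⟨hl, fun p hp hbefore => ?_⟩
    have hgp : g ≤ p := by by_contra h; simp [not_le.mp h] at hp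
    have hpg : p ≤ g := by by_contra h; simpa using hbefore g (by omega)
    exact le_antisymm hpg hgp ▸ hg

def block (g : ℕ) : List Bool := true :: List.replicate g false

def ofGaps (gs : List ℕ) (t : ℕ) : List Bool := gs.flatMap block ++ block t

theorem ofGaps_nil (t : ℕ) : ofGaps [] t = true :: List.replicate t false := rfl

theorem ofGaps_cons (g : ℕ) (gs : List ℕ) (t : ℕ) :
    ofGaps (g :: gs) t = true :: (List.replicate g false ++ ofGaps gs t) := by
  simp [ofGaps, block]

theorem head?_ofGaps (gs : List ℕ) (t : ℕ) : (ofGaps gs t).head? = some true := by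
  cases gs <;> rfl

theorem length_ofGaps (gs : List ℕ) (t : ℕ) :
    (ofGaps gs t).length = gs.length + gs.sum + t + 1 := by
  induction gs with
  | nil => simp [ofGaps_nil]
  | cons g gs ih =>
    simp only [ofGaps_cons, List.length_cons, List.length_append, ih, List.length_replicate,
      List.sum_cons]
    omega

theorem wt_ofGaps (gs : List ℕ) (t : ℕ) : wt (ofGaps gs t) = gs.length + 1 := by
  induction gs with
  | nil => simp [ofGaps_nil, wt, List.count_replicate]
  | cons g gs ih => simp_all [ofGaps_cons, wt, List.count_replicate]

theorem leadZeros_replicate_false_append (g : ℕ) {l : List Bool} (hl : l.head? = some true) :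
    leadZeros (List.replicate g false ++ l) = g := by
  obtain ⟨l, rfl⟩ := List.head?_eq_some_iff.mp hl
  induction g with
  | zero => simp [leadZeros]
  | succ g ih => simp_all [leadZeros, List.replicate_succ]

theorem trailZeros_ofGaps (gs : List ℕ) (t : ℕ) : trailZeros (ofGaps gs t) = t := by
  have : (ofGaps gs t).reverse =
      List.replicate t false ++ (true :: (gs.flatMap block).reverse) := by
    simp [ofGaps, block]
  rw [trailZeros, this]
  exact leadZeros_replicate_false_append t rfl

theorem internalOK_ofGaps_iff (gs : List ℕ) (t : ℕ) :
    internalOK d k (ofGaps gs t) ↔ ∀ g ∈ gs, d ≤ g ∧ g ≤ k := by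
  induction gs with
  | nil =>
    have := (internalOK_replicate_false_append (d := d) (k := k) t []).mpr internalOK_nil
    simp_all [ofGaps_nil, internalOK_cons]
  | cons g gs ih =>
    rw [ofGaps_cons, internalOK_true_cons_replicate_append (head?_ofGaps gs t), ih,
      List.forall_mem_cons]

theorem ofGaps_injective : Function.Injective2 ofGaps := by
  intro gs gs' t t' h
  have ht : t = t' := by simpa only [trailZeros_ofGaps] using congrArg trailZeros h
  subst ht
  refine ⟨?_, rfl⟩
  have hlen : gs.length = gs'.length := by simpa only [wt_ofGaps, add_left_inj] using congrArg wt h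
  induction gs generalizing gs' with
  | nil => exact (List.length_eq_zero_iff.mp hlen.symm).symm
  | cons g gs ih =>
    obtain ⟨g', gs', rfl⟩ := List.exists_cons_of_length_eq_add_one hlen.symm
    rw [ofGaps_cons, ofGaps_cons, List.cons_inj_right] at h
    have hg : g = g' := by
      simpa only [leadZeros_replicate_false_append _ (head?_ofGaps _ _)] using congrArg leadZeros h
    subst hg
    rw [ih (List.append_cancel_left h) (by simpa using hlen)]

theorem ofGaps_append_false (gs : List ℕ) (t : ℕ) :
    ofGaps gs t ++ [false] = ofGaps gs (t + 1) := by
  simp [ofGaps, block, List.replicate_succ']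

theorem ofGaps_append_true (gs : List ℕ) (t : ℕ) :
    ofGaps gs t ++ [true] = ofGaps (gs ++ [t]) 0 := by
  simp [ofGaps, block]

theorem exists_ofGaps_eq {l : List Bool} (hl : l.head? = some true) :
    ∃ gs t, ofGaps gs t = l := by
  induction l using List.reverseRecOn with
  | nil => simp at hl
  | append_singleton l b ih =>
    rcases eq_or_ne l [] with rfl | hne
    · obtain rfl : b = true := by simpa using hl
      exact ⟨[], 0, rfl⟩
    · obtain ⟨gs, t, rfl⟩ := ih (by rwa [List.head?_append_of_ne_nil _ hne] at hl)
      cases b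
      · exact ⟨gs, t + 1, (ofGaps_append_false gs t).symm⟩
      · exact ⟨gs ++ [t], 0, (ofGaps_append_true gs t).symm⟩

end Gaps

theorem Adkr_succ_eq_card (d k r n m : ℕ) :
    Adkr d k r n (m + 1) = #{p ∈ Fintype.piFinset (fun _ : Fin m => Icc d k) ×ˢ range (r + 1) |
      m + 1 + ∑ i, p.1 i + p.2 = n} := by
  set S := {p ∈ Fintype.piFinset (fun _ : Fin m => Icc d k) ×ˢ range (r + 1) |
      m + 1 + ∑ i, p.1 i + p.2 = n}
  have hS : {l : List Bool | l.length = n ∧ (l ≠ [] → l.head? = some true) ∧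
      internalOK d k l ∧ trailZeros l ≤ r ∧ wt l = m + 1} =
      (fun p : (Fin m → ℕ) × ℕ => ofGaps (List.ofFn p.1) p.2) '' S := by
    ext l
    simp only [Set.mem_ofPred_eq, Set.mem_image, coe_filter, mem_product, Fintype.mem_piFinset,
      mem_Icc, mem_range, S]
    constructor
    · rintro ⟨hlen, hhead, hok, htrail, hwt⟩
      have hne : l ≠ [] := by rintro rfl; simp [wt] at hwt
      obtain ⟨gs, t, rfl⟩ := exists_ofGaps_eq (hhead hne)
      obtain rfl : gs.length = m := by simpa [wt_ofGaps] using hwt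
      rw [internalOK_ofGaps_iff] at hok
      rw [trailZeros_ofGaps] at htrail
      refine ⟨(gs.get, t), ⟨⟨fun i => hok _ (List.get_mem _ _), by omega⟩, ?_⟩,
        by rw [List.ofFn_get]⟩
      rw [← hlen, length_ofGaps, ← List.sum_ofFn, List.ofFn_get]
      omega
    · rintro ⟨⟨f, t⟩, ⟨⟨hf, ht⟩, hsum⟩, rfl⟩
      refine ⟨?_, fun _ => head?_ofGaps _ _, ?_, ?_, ?_⟩
      · rw [length_ofGaps, List.length_ofFn, List.sum_ofFn]; omega
      · rw [internalOK_ofGaps_iff]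
        intro g hg
        obtain ⟨i, rfl⟩ := List.mem_ofFn.mp hg
        exact hf i
      · rw [trailZeros_ofGaps]; omega
      · rw [wt_ofGaps, List.length_ofFn]
  have hinj : Function.Injective fun p : (Fin m → ℕ) × ℕ => ofGaps (List.ofFn p.1) p.2 :=
    fun p q h => by
      obtain ⟨h₁, h₂⟩ := ofGaps_injective h
      exact Prod.ext (List.ofFn_injective h₁) h₂
  rw [Adkr, ← Set.ncard_coe_finset, ← Set.ncard_image_of_injective _ hinj, ← hS]
  exact Nat.card_coe_set_eq _

theorem natCast_card_filter_eq_coeff {R : Type*} [CommSemiring R] (c m n : ℕ)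
    (A B : Finset ℕ) :
    (#{p ∈ Fintype.piFinset (fun _ : Fin m => A) ×ˢ B | c + ∑ i, p.1 i + p.2 = n} : R) =
      coeff n (X ^ c * (∑ a ∈ A, X ^ a) ^ m * ∑ b ∈ B, X ^ b) := by
  have hpow : (∑ a ∈ A, (X : R⟦X⟧) ^ a) ^ m =
      ∑ f ∈ Fintype.piFinset (fun _ : Fin m => A), X ^ ∑ i, f i := by
    rw [← Fin.prod_const, prod_univ_sum]
    simp_rw [prod_pow_eq_pow_sum]
  rw [hpow, mul_assoc, sum_mul_sum, ← sum_product', mul_sum, map_sum, natCast_card_filter]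
  refine sum_congr rfl fun p _ => ?_
  rw [← pow_add, ← pow_add, ← add_assoc, coeff_X_pow]
  simp only [eq_comm]

noncomputable def genFun (d k r m : ℕ) : ℤ⟦X⟧ :=
  X ^ (m + 1) * (∑ g ∈ Icc d k, X ^ g) ^ m * ∑ t ∈ range (r + 1), X ^ t

theorem natCast_Adkr_succ_eq_coeff_genFun (d k r n m : ℕ) :
    (Adkr d k r n (m + 1) : ℤ) = coeff n (genFun d k r m) := by
  rw [Adkr_succ_eq_card, natCast_card_filter_eq_coeff, genFun]

-- Both sides vanish for `a > n`, so no case distinction on `n < ν` is needed later.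
theorem coeff_X_pow_mul_invOneSubPow (a m n : ℕ) :
    coeff n (X ^ a * (invOneSubPow ℤ (m + 1)).val) = ibin ((n : ℤ) + m - a) m := by
  rw [ibin]
  by_cases han : a ≤ n
  · obtain ⟨s, rfl⟩ := Nat.exists_eq_add_of_le han
    rw [add_comm a s, coeff_X_pow_mul, invOneSubPow_val_succ_eq_mk_add_choose, coeff_mk,
      if_pos (by omega)]
    congr 2
    omega
  · rw [coeff_X_pow_mul', if_neg han, eq_comm]
    split_ifs with h
    · rw [Nat.choose_eq_zero_of_lt (by omega), Nat.cast_zero]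
    · rfl

theorem one_sub_X_pow_pow (q m : ℕ) :
    ((1 : ℤ⟦X⟧) - X ^ q) ^ m =
      ∑ j ∈ range (m + 1), C ((-1 : ℤ) ^ j * m.choose j) * X ^ (q * j) := by
  rw [sub_eq_neg_add, add_pow]
  refine sum_congr rfl fun j _ => ?_
  rw [neg_pow, ← pow_mul, one_pow, mul_one, map_mul, map_pow, map_neg, map_one, map_natCast]
  ring

theorem sum_Icc_X_pow {d k : ℕ} (hk : d ≤ k) :
    ∑ g ∈ Icc d k, (X : ℤ⟦X⟧) ^ g = X ^ d * ∑ i ∈ range (k - d + 1), X ^ i := by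
  rw [← Ico_add_one_right_eq_Icc, sum_Ico_eq_sum_range, mul_sum,
    show k + 1 - d = k - d + 1 by omega]
  simp only [pow_add]

theorem genFun_eq_mul_invOneSubPow {d k : ℕ} (hk : d ≤ k) (r m : ℕ) :
    genFun d k r m =
      X ^ (m + 1 + d * m) * (1 - X ^ (k - d + 1)) ^ m * (1 - X ^ (r + 1)) *
        (invOneSubPow ℤ (m + 1)).val := by
  have hinv : (1 - X : ℤ⟦X⟧) ^ (m + 1) * (invOneSubPow ℤ (m + 1)).val = 1 := by
    rw [← invOneSubPow_inv_eq_one_sub_pow]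
    exact (invOneSubPow ℤ (m + 1)).inv_val
  calc _ = genFun d k r m * ((1 - X) ^ (m + 1) * (invOneSubPow ℤ (m + 1)).val) := by
          rw [hinv, mul_one]
    _ = X ^ (m + 1) * (X ^ d) ^ m * ((1 - X) * ∑ i ∈ range (k - d + 1), X ^ i) ^ m *
          ((1 - X) * ∑ t ∈ range (r + 1), X ^ t) * (invOneSubPow ℤ (m + 1)).val := by
      rw [genFun, sum_Icc_X_pow hk, mul_pow, mul_pow, pow_succ (1 - X)]; ring
    _ = _ := by rw [mul_neg_geom_sum, mul_neg_geom_sum, ← pow_mul, ← pow_add]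

theorem coeff_genFun {d k : ℕ} (hk : d ≤ k) (r m n : ℕ) :
    coeff n (genFun d k r m) =
      ∑ j ∈ range (m + 1), (-1 : ℤ) ^ j * (m.choose j) *
        (ibin ((n : ℤ) - 1 - m * d - j * ((k : ℤ) - d + 1)) m -
         ibin ((n : ℤ) - 1 - (r + 1) - m * d - j * ((k : ℤ) - d + 1)) m) := by
  rw [genFun_eq_mul_invOneSubPow hk, one_sub_X_pow_pow, mul_sum, sum_mul, sum_mul, map_sum]
  refine sum_congr rfl fun j _ => ?_
  have hsplit : X ^ (m + 1 + d * m) * (C ((-1 : ℤ) ^ j * m.choose j) * X ^ ((k - d + 1) * j)) *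
      (1 - X ^ (r + 1)) * (invOneSubPow ℤ (m + 1)).val =
      C ((-1 : ℤ) ^ j * m.choose j) *
        (X ^ (m + 1 + d * m + (k - d + 1) * j) * (invOneSubPow ℤ (m + 1)).val -
          X ^ (m + 1 + d * m + (k - d + 1) * j + (r + 1)) * (invOneSubPow ℤ (m + 1)).val) := by
    simp only [pow_add]; ring
  rw [hsplit, coeff_C_mul, map_sub, coeff_X_pow_mul_invOneSubPow, coeff_X_pow_mul_invOneSubPow]
  congr 3 <;> push_cast [Nat.cast_sub hk] <;> ring

end DkrSeq

open DkrSeq in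
theorem stmt4 (d k r n ν : ℕ) (hk : d ≤ k) (hν : 1 ≤ ν) :
    (Adkr d k r n ν : ℤ) =
      ∑ j ∈ Finset.range ν, (-1 : ℤ) ^ j * ((ν - 1).choose j) *
        (ibin ((n : ℤ) - 1 - (ν - 1 : ℕ) * d - j * ((k : ℤ) - d + 1)) (ν - 1) -
         ibin ((n : ℤ) - 1 - (r + 1) - (ν - 1 : ℕ) * d - j * ((k : ℤ) - d + 1)) (ν - 1)) := by
  obtain ⟨m, rfl⟩ : ∃ m, ν = m + 1 := ⟨ν - 1, by omega⟩
  rw [natCast_Adkr_succ_eq_coeff_genFun, coeff_genFun hk]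
  simp only [Nat.add_sub_cancel]
end

section
/- Under NRZI encoding, a binary sequence x ∈ {0,1}^n of charge σ (the sum of the bipolar sequence z) that begins with a one and has first one-run-length j satisfies: the charge of the remaining subsequence of length n-j beginning with a one equals -σ - j. Consequently, if C_n^σ counts (d,k,r)-sequences of length n beginning with one whose NRZI charge is σ, then for σ ≠ -n and n ≥ d+1: C_n^σ = Σ_{j=d+1}^{min(n,k+1)} C_{n-j}^{-σ-j}. -/
lemma chargeAux_neg (z : ℤ) (l : List Bool) : chargeAux (-z) l = -chargeAux z l := by
  induction l generalizing z with
  | nil => simp [chargeAux]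
  | cons b t ih => cases b <;> simp [chargeAux, ih, add_comm]

lemma chargeAux_replicate_false_append (z : ℤ) (m : ℕ) (y : List Bool) :
    chargeAux z (List.replicate m false ++ y) = m * z + chargeAux z y := by
  induction m with
  | zero => simp
  | succ m ih => simp [List.replicate_succ, chargeAux, ih]; ring

theorem charge_true_cons_replicate_append {j : ℕ} (hj : 1 ≤ j) (y : List Bool) :
    charge (true :: (List.replicate (j - 1) false ++ y)) = -charge y - j := by
  obtain ⟨m, rfl⟩ := Nat.exists_eq_add_of_le' hj
  simp [charge, chargeAux, chargeAux_replicate_false_append, chargeAux_neg]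
  ring

lemma trailZeros_append_of_true_mem (x : List Bool) {y : List Bool} (hy : true ∈ y) :
    trailZeros (x ++ y) = trailZeros y := by
  unfold trailZeros
  rw [List.reverse_append, List.takeWhile_append, if_neg]
  intro hlen
  have hall := List.takeWhile_eq_self_iff.mp ((List.takeWhile_prefix _).eq_of_length hlen)
  simpa using hall true (List.mem_reverse.mpr hy)

lemma exists_eq_replicate_false_append (t : List Bool) :
    ∃ m y, (y ≠ [] → y.head? = some true) ∧ t = List.replicate m false ++ y := by
  induction t with
  | nil => exact ⟨0, [], by simp, rfl⟩
  | cons b s ih =>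
    cases b
    · obtain ⟨m, y, hy, rfl⟩ := ih
      exact ⟨m + 1, y, hy, rfl⟩
    · exact ⟨0, true :: s, by simp, rfl⟩

lemma replicate_false_append_inj {m m' : ℕ} {y y' : List Bool}
    (hy : y ≠ [] → y.head? = some true) (hy' : y' ≠ [] → y'.head? = some true)
    (h : List.replicate m false ++ y = List.replicate m' false ++ y') : m = m' ∧ y = y' := by
  induction m generalizing m' with
  | zero =>
    cases m' with
    | zero => simpa using h
    | succ m' => subst h; simp [List.replicate_succ] at hy
  | succ m ih =>
    cases m' with
    | zero => subst h; simp [List.replicate_succ] at hy'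
    | succ m' =>
      obtain ⟨rfl, rfl⟩ := ih (by simpa [List.replicate_succ] using h)
      exact ⟨rfl, rfl⟩

section FirstRun

variable {d k m : ℕ} {y : List Bool}

lemma getD_true_cons_replicate_append_of_le {i : ℕ} (h1 : 1 ≤ i) (h2 : i ≤ m) :
    (true :: (List.replicate m false ++ y)).getD i false = false := by
  obtain ⟨p, rfl⟩ := Nat.exists_eq_add_of_le' h1
  rw [List.getD_cons_succ, List.getD_append _ _ _ _ (by simp; omega),
    List.getD_replicate _ (by omega)]

lemma getD_true_cons_replicate_append_of_lt {i : ℕ} (h : m < i) :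
    (true :: (List.replicate m false ++ y)).getD i false = y.getD (i - m - 1) false := by
  obtain ⟨p, rfl⟩ := Nat.exists_eq_add_of_le' (Nat.one_le_of_lt h)
  rw [List.getD_cons_succ, List.getD_append_right _ _ _ _ (by simp; omega)]
  congr 1
  simp only [List.length_replicate]
  omega

lemma lt_length_of_getD_eq_true {l : List Bool} {i : ℕ} (h : l.getD i false = true) :
    i < l.length := by
  by_contra hc
  rw [List.getD_eq_default _ _ (not_lt.mp hc)] at h
  exact Bool.false_ne_true h

lemma internalOK_of_true_cons_replicate_append
    (hI : internalOK d k (true :: (List.replicate m false ++ y))) : internalOK d k y := by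
  intro i j hij hj hi hj' hbetween
  have h := hI (i + m + 1) (j + m + 1) (by omega) (by simp; omega)
    (by rwa [getD_true_cons_replicate_append_of_lt (by omega), show i + m + 1 - m - 1 = i by omega])
    (by rwa [getD_true_cons_replicate_append_of_lt (by omega), show j + m + 1 - m - 1 = j by omega])
    (fun q hq1 hq2 => by
      rw [getD_true_cons_replicate_append_of_lt (by omega)]
      exact hbetween _ (by omega) (by omega))
  omega

lemma gap_le_of_internalOK_true_cons_replicate_append (hy : y.head? = some true)
    (hI : internalOK d k (true :: (List.replicate m false ++ y))) : d ≤ m ∧ m ≤ k := by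
  have hy0 : y.getD 0 false = true := by cases y <;> simp_all
  have h := hI 0 (m + 1) (by omega) (by simp; exact lt_length_of_getD_eq_true hy0) rfl
    (by rwa [getD_true_cons_replicate_append_of_lt (by omega), show m + 1 - m - 1 = 0 by omega])
    (fun q h1 h2 => getD_true_cons_replicate_append_of_le (by omega) (by omega))
  omega

lemma internalOK_true_cons_replicate_append (hy : y.head? = some true) (hd : d ≤ m) (hk : m ≤ k)
    (hI : internalOK d k y) : internalOK d k (true :: (List.replicate m false ++ y)) := by
  intro i j hij hj hi hj' hbetween
  have hmj : m < j := by
    by_contra hjm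
    rw [getD_true_cons_replicate_append_of_le (by omega) (by omega)] at hj'
    exact Bool.false_ne_true hj'
  rw [getD_true_cons_replicate_append_of_lt hmj] at hj'
  rcases Nat.eq_zero_or_pos i with rfl | hi0
  · -- the first one of `y` sits at position `m + 1`
    have hjm : j = m + 1 := by
      by_contra hne
      have h := hbetween (m + 1) (by omega) (by omega)
      rw [getD_true_cons_replicate_append_of_lt (by omega), show m + 1 - m - 1 = 0 by omega] at h
      cases y <;> simp_all
    omega
  · have hmi : m < i := by
      by_contra him
      rw [getD_true_cons_replicate_append_of_le (by omega) (by omega)] at hi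
      exact Bool.false_ne_true hi
    rw [getD_true_cons_replicate_append_of_lt hmi] at hi
    have h := hI (i - m - 1) (j - m - 1) (by omega) (lt_length_of_getD_eq_true hj') hi hj'
      (fun q hq1 hq2 => by
        have h := hbetween (q + m + 1) (by omega) (by omega)
        rwa [getD_true_cons_replicate_append_of_lt (by omega), show q + m + 1 - m - 1 = q by omega]
          at h)
    omega

theorem internalOK_true_cons_replicate_append_iff (hy : y.head? = some true) :
    internalOK d k (true :: (List.replicate m false ++ y)) ↔ (d ≤ m ∧ m ≤ k) ∧ internalOK d k y :=
  ⟨fun h => ⟨gap_le_of_internalOK_true_cons_replicate_append hy h,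
      internalOK_of_true_cons_replicate_append h⟩,
    fun ⟨⟨hd, hk⟩, h⟩ => internalOK_true_cons_replicate_append hy hd hk h⟩

end FirstRun

def IsChargedDKRSeq (d k r n : ℕ) (σ : ℤ) (l : List Bool) : Prop :=
  l.length = n ∧ (l ≠ [] → l.head? = some true) ∧ internalOK d k l ∧ trailZeros l ≤ r ∧
    charge l = σ

instance (d k r n : ℕ) (σ : ℤ) : Finite {l // IsChargedDKRSeq d k r n σ l} :=
  ((List.finite_length_eq Bool n).subset fun _ hl => hl.1).to_subtype

lemma charge_nil : charge [] = 0 := rfl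

theorem isChargedDKRSeq_true_cons_replicate_append_iff {d k r n j : ℕ} {σ : ℤ} {y : List Bool}
    (hσ : σ ≠ -n) (hj : 1 ≤ j) (hy : y ≠ [] → y.head? = some true) :
    IsChargedDKRSeq d k r n σ (true :: (List.replicate (j - 1) false ++ y)) ↔
      j ∈ Finset.Icc (d + 1) (min n (k + 1)) ∧ IsChargedDKRSeq d k r (n - j) (-σ - j) y := by
  rw [IsChargedDKRSeq, IsChargedDKRSeq, charge_true_cons_replicate_append hj]
  rcases eq_or_ne y [] with rfl | hne
  · -- both sides force `σ = -n`
    simp only [List.append_nil, List.length_cons, List.length_replicate, List.length_nil,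
      charge_nil, Finset.mem_Icc, le_min_iff]
    constructor
    · rintro ⟨hlen, -, -, -, hch⟩
      omega
    · rintro ⟨⟨-, hjn, -⟩, hlen, -, -, -, hch⟩
      omega
  · have hy1 := hy hne
    have hmem : true ∈ y := by cases y <;> simp_all
    rw [internalOK_true_cons_replicate_append_iff hy1,
      ← List.cons_append, trailZeros_append_of_true_mem _ hmem]
    simp only [List.length_append, List.length_cons, List.length_replicate, Finset.mem_Icc,
      le_min_iff]
    constructor
    · rintro ⟨hlen, -, ⟨⟨hd, hk⟩, hI⟩, htr, hch⟩
      exact ⟨by omega, by omega, hy, hI, htr, by omega⟩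
    · rintro ⟨hrange, hlen, -, hI, htr, hch⟩
      exact ⟨by omega, fun _ => rfl, ⟨by omega, hI⟩, htr, by omega⟩

lemma exists_eq_true_cons_replicate_append {d k r n : ℕ} {σ : ℤ} (hσ : σ ≠ -n) {l : List Bool}
    (hl : IsChargedDKRSeq d k r n σ l) :
    ∃ j y, 1 ≤ j ∧ (y ≠ [] → y.head? = some true) ∧
      l = true :: (List.replicate (j - 1) false ++ y) := by
  obtain ⟨hlen, hhead, -, -, hch⟩ := hl
  cases l with
  | nil => exact absurd (by simp [← hlen, ← hch, charge_nil]) hσ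
  | cons b t =>
    obtain rfl : b = true := by simpa using hhead (List.cons_ne_nil _ _)
    obtain ⟨m, y, hy, rfl⟩ := exists_eq_replicate_false_append t
    exact ⟨m + 1, y, by omega, hy, rfl⟩

theorem Cdkr_eq_sum {d k r n : ℕ} {σ : ℤ} (hσ : σ ≠ -n) :
    Cdkr d k r n σ = ∑ j ∈ Finset.Icc (d + 1) (min n (k + 1)), Cdkr d k r (n - j) (-σ - j) := by
  set S := Finset.Icc (d + 1) (min n (k + 1))
  change Nat.card {l // IsChargedDKRSeq d k r n σ l} =
    ∑ j ∈ S, Nat.card {y // IsChargedDKRSeq d k r (n - j) (-σ - j) y}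
  have one_le : ∀ j ∈ S, 1 ≤ j := fun j hj => by simp [S] at hj; omega
  let g : (Σ j : S, {y // IsChargedDKRSeq d k r (n - j) (-σ - j) y}) →
      {l // IsChargedDKRSeq d k r n σ l} := fun p =>
    ⟨true :: (List.replicate (p.1 - 1) false ++ p.2),
      (isChargedDKRSeq_true_cons_replicate_append_iff hσ (one_le _ p.1.2) p.2.2.2.1).mpr
        ⟨p.1.2, p.2.2⟩⟩
  have hg : Function.Bijective g := by
    constructor
    · rintro ⟨⟨j, hj⟩, ⟨y, hy⟩⟩ ⟨⟨j', hj'⟩, ⟨y', hy'⟩⟩ h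
      obtain ⟨hjj, rfl⟩ : j - 1 = j' - 1 ∧ y = y' := replicate_false_append_inj hy.2.1 hy'.2.1
        (List.cons_injective (congrArg Subtype.val h))
      obtain rfl : j = j' := by have := one_le j hj; have := one_le j' hj'; omega
      rfl
    · rintro ⟨l, hl⟩
      obtain ⟨j, y, hj, hy, rfl⟩ := exists_eq_true_cons_replicate_append hσ hl
      obtain ⟨hjS, hy'⟩ := (isChargedDKRSeq_true_cons_replicate_append_iff hσ hj hy).mp hl
      exact ⟨⟨⟨j, hjS⟩, ⟨y, hy'⟩⟩, rfl⟩
  rw [← Nat.card_congr (Equiv.ofBijective g hg), Nat.card_sigma]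
  exact Finset.sum_coe_sort S (fun j => Nat.card {y // IsChargedDKRSeq d k r (n - j) (-σ - j) y})

theorem stmt5_general (d k r : ℕ) :
    (∀ (j : ℕ) (y : List Bool), 1 ≤ j → (y = [] ∨ y.head? = some true) →
      charge (true :: (List.replicate (j - 1) false ++ y)) = -(charge y) - j) ∧
    (∀ (n : ℕ) (σ : ℤ), σ ≠ -(n : ℤ) → d + 1 ≤ n →
      Cdkr d k r n σ =
        ∑ j ∈ Finset.Icc (d + 1) (min n (k + 1)), Cdkr d k r (n - j) (-σ - j)) :=
  ⟨fun _ y hj _ => charge_true_cons_replicate_append hj y,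
    fun _ _ hσ _ => Cdkr_eq_sum hσ⟩

theorem stmt5 (d k r : ℕ) (hk : d ≤ k) :
    (∀ (j : ℕ) (y : List Bool), 1 ≤ j → (y = [] ∨ y.head? = some true) →
      charge (true :: (List.replicate (j - 1) false ++ y)) = -(charge y) - j) ∧
    (∀ (n : ℕ) (σ : ℤ), σ ≠ -(n : ℤ) → d + 1 ≤ n →
      Cdkr d k r n σ =
        ∑ j ∈ Finset.Icc (d + 1) (min n (k + 1)), Cdkr d k r (n - j) (-σ - j)) :=
  stmt5_general d k r
end

section
/- The generating function A^ν(t) = Σ_{n≥0} A_n^ν t^n of the numbers A_n^ν of (d,k,r)-constrained binary sequences of length n and weight ν beginning with a one satisfies, for ν ≥ 1, A^ν(t) = t^{ν-1}/(1-t)^ν · t^{1+(ν-1)d} (1-t^{r+1}) (1-t^{k-d+1})^{ν-1} as an identity of formal power series. -/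
/-!
A word of weight `ν ≥ 1` beginning with a one is uniquely `1 0^g₁ 1 0^g₂ ⋯ 1 0^gᵥ`;
it has length `ν + ∑ gᵢ`, and it is `(d,k,r)`-constrained iff `gᵢ ∈ [d, k]` for `i < ν`
and `gᵥ ≤ r`. Hence `A^ν(t) = t^ν (∑_{g=d}^{k} t^g)^(ν-1) ∑_{g=0}^{r} t^g`, and summing
the geometric series gives the formula.
-/

open Finset

theorem Finset.sum_Icc_pow_eq_pow_mul_sum_range {R : Type*} [Semiring R] (x : R) {a b : ℕ}
    (h : a ≤ b) : ∑ i ∈ Icc a b, x ^ i = x ^ a * ∑ i ∈ range (b - a + 1), x ^ i := by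
  rw [← Finset.Ico_add_one_right_eq_Icc, sum_Ico_eq_sum_range, mul_sum]
  simp only [pow_add, Nat.sub_add_comm h]

namespace PowerSeries

theorem coeff_sum_X_pow {R α : Type*} [CommSemiring R] (S : Finset α) (f : α → ℕ)
    (n : ℕ) : coeff n (∑ a ∈ S, (X : R⟦X⟧) ^ f a) = #{a ∈ S | f a = n} := by
  simp only [map_sum, coeff_X_pow, eq_comm (a := n), sum_boole]

theorem mk_card_filter_piFinset_eq {R ι : Type*} [CommSemiring R] [Fintype ι] [DecidableEq ι]
    (s : ι → Finset ℕ) (c : ℕ) :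
    mk (fun n => (#{p ∈ Fintype.piFinset s | c + ∑ i, p i = n} : R)) =
      X ^ c * ∏ i, ∑ g ∈ s i, X ^ g := by
  ext n
  simp only [prod_univ_sum, prod_pow_eq_pow_sum, mul_sum, ← pow_add, coeff_sum_X_pow, coeff_mk]

theorem geom_sum_X_eq {K : Type*} [Field K] (n : ℕ) :
    ∑ i ∈ range n, (X : K⟦X⟧) ^ i = (1 - X)⁻¹ * (1 - X ^ n) := by
  rw [← mul_neg_geom_sum, ← mul_assoc, PowerSeries.inv_mul_cancel _ (by simp), one_mul]

end PowerSeries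

def ofGaps : List ℕ → List Bool
  | [] => []
  | g :: gs => true :: (List.replicate g false ++ ofGaps gs)

@[simp] theorem ofGaps_nil : ofGaps [] = [] := rfl

@[simp] theorem ofGaps_cons (g : ℕ) (gs : List ℕ) :
    ofGaps (g :: gs) = true :: (List.replicate g false ++ ofGaps gs) := rfl

theorem length_ofGaps (gs : List ℕ) : (ofGaps gs).length = gs.length + gs.sum := by
  induction gs with
  | nil => rfl
  | cons g gs ih => simp [ih]; omega

theorem wt_ofGaps (gs : List ℕ) : wt (ofGaps gs) = gs.length := by
  induction gs with
  | nil => rfl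
  | cons g gs ih => simp_all [wt, List.count_replicate]

theorem ofGaps_append (gs hs : List ℕ) : ofGaps (gs ++ hs) = ofGaps gs ++ ofGaps hs := by
  induction gs with
  | nil => rfl
  | cons g gs ih => simp [ih]

theorem trailZeros_ofGaps (gs : List ℕ) : trailZeros (ofGaps gs) = gs.getD (gs.length - 1) 0 := by
  rcases gs.eq_nil_or_concat with rfl | ⟨gs, t, rfl⟩
  · rfl
  · simp [trailZeros, ofGaps_append]

theorem ofGaps_injective : Function.Injective ofGaps := by
  intro gs
  induction gs with
  | nil => rintro (_ | ⟨_, _⟩) h <;> simp_all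
  | cons g gs ih =>
    rintro (_ | ⟨g', gs'⟩) h
    · simp at h
    simp only [ofGaps_cons, List.cons.injEq, true_and] at h
    have hg : g = g' := by
      have hlead : ∀ hs : List ℕ, (ofGaps hs).takeWhile (fun b => !b) = [] := by
        rintro (_ | _) <;> rfl
      simpa [List.takeWhile_append, List.takeWhile_replicate, hlead] using
        congrArg (fun l => (l.takeWhile (fun b => !b)).length) h
    subst hg
    rw [ih (List.append_cancel_left h)]

theorem exists_replicate_false_append (l : List Bool) :
    ∃ g l', l = List.replicate g false ++ l' ∧ (l' ≠ [] → l'.head? = some true) := by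
  induction l with
  | nil => exact ⟨0, [], rfl, by simp⟩
  | cons b l ih =>
    cases b
    · obtain ⟨g, l', rfl, hl'⟩ := ih
      exact ⟨g + 1, l', rfl, hl'⟩
    · exact ⟨0, true :: l, rfl, by simp⟩

theorem exists_ofGaps_eq (l : List Bool) (hl : l ≠ [] → l.head? = some true) :
    ∃ gs, ofGaps gs = l := by
  induction hn : l.length using Nat.strong_induction_on generalizing l with
  | _ n ih =>
    match l, hl with
    | [], _ => exact ⟨[], rfl⟩
    | b :: t, hl =>
      obtain rfl : b = true := by simpa using hl
      obtain ⟨g, t', rfl, ht'⟩ := exists_replicate_false_append t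
      obtain ⟨gs, rfl⟩ := ih _ (by simp at hn; omega) t' ht' rfl
      exact ⟨g :: gs, rfl⟩

def onePos (gs : List ℕ) (j : ℕ) : ℕ := j + (gs.take j).sum

theorem onePos_zero (gs : List ℕ) : onePos gs 0 = 0 := by simp [onePos]

theorem onePos_cons_succ (g : ℕ) (gs : List ℕ) (j : ℕ) :
    onePos (g :: gs) (j + 1) = onePos gs j + g + 1 := by
  simp [onePos]; omega

theorem onePos_succ {gs : List ℕ} {j : ℕ} (hj : j < gs.length) :
    onePos gs (j + 1) = onePos gs j + gs[j] + 1 := by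
  simp only [onePos, List.take_add_one, List.sum_append, List.getElem?_eq_getElem hj,
    Option.toList_some, List.sum_singleton]
  omega

theorem onePos_strictMono (gs : List ℕ) : StrictMono (onePos gs) :=
  strictMono_nat_of_lt_succ fun j => by
    have := (List.take_prefix_take_left (l := gs) (j.le_add_right 1)).sublist.sum_le_sum (by simp)
    simp only [onePos]; omega

theorem onePos_lt_length {gs : List ℕ} {j : ℕ} (hj : j < gs.length) :
    onePos gs j < (ofGaps gs).length := by
  have := (List.take_sublist j gs).sum_le_sum (by simp)
  rw [length_ofGaps, onePos]; omega

theorem getD_ofGaps_eq_true_iff (gs : List ℕ) (i : ℕ) :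
    (ofGaps gs).getD i false = true ↔ ∃ j < gs.length, onePos gs j = i := by
  induction gs generalizing i with
  | nil => simp
  | cons g gs ih =>
    rcases i with _ | i
    · exact ⟨fun _ => ⟨0, by simp, onePos_zero _⟩, fun _ => rfl⟩
    rw [ofGaps_cons, List.getD_cons_succ]
    by_cases hig : i < g
    · rw [List.getD_append _ _ _ _ (by simpa using hig)]
      simp only [List.getD_eq_getElem?_getD, List.getElem?_replicate, hig]
      refine ⟨by simp, ?_⟩
      rintro ⟨_ | j, -, hj⟩
      · simp [onePos_zero] at hj
      · rw [onePos_cons_succ] at hj; omega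
    · obtain ⟨i, rfl⟩ := Nat.exists_eq_add_of_le (not_lt.1 hig)
      rw [List.getD_append_right _ _ _ _ (by simp), List.length_replicate, Nat.add_sub_cancel_left,
        ih]
      constructor
      · rintro ⟨j, hj, rfl⟩
        exact ⟨j + 1, by simpa using hj, by rw [onePos_cons_succ]; omega⟩
      · rintro ⟨_ | j, hj, he⟩
        · simp [onePos_zero] at he
        · exact ⟨j, by simpa using hj, by rw [onePos_cons_succ] at he; omega⟩

theorem internalOK_ofGaps_iff (d k : ℕ) (gs : List ℕ) :
    internalOK d k (ofGaps gs) ↔ ∀ j (hj : j + 1 < gs.length), d ≤ gs[j] ∧ gs[j] ≤ k := by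
  have hmono := onePos_strictMono gs
  constructor
  · intro H j hj
    have hgap := onePos_succ (gs := gs) (j := j) (by omega)
    have hbetween : ∀ m, onePos gs j < m → m < onePos gs (j + 1) →
        (ofGaps gs).getD m false = false := by
      intro m hm₁ hm₂
      rw [Bool.eq_false_iff, ne_eq, getD_ofGaps_eq_true_iff]
      rintro ⟨c, -, rfl⟩
      have := hmono.lt_iff_lt.1 hm₁
      have := hmono.lt_iff_lt.1 hm₂
      omega
    have := H _ _ (hmono j.lt_add_one) (onePos_lt_length hj)
      ((getD_ofGaps_eq_true_iff _ _).2 ⟨j, by omega, rfl⟩)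
      ((getD_ofGaps_eq_true_iff _ _).2 ⟨j + 1, hj, rfl⟩) hbetween
    omega
  · intro H i i' hii' _ hi hi' hbetween
    obtain ⟨a, ha, rfl⟩ := (getD_ofGaps_eq_true_iff _ _).1 hi
    obtain ⟨b, hb, rfl⟩ := (getD_ofGaps_eq_true_iff _ _).1 hi'
    have hab := hmono.lt_iff_lt.1 hii'
    -- otherwise the one at position `onePos gs (a + 1)` would lie strictly in between
    obtain rfl : b = a + 1 := by
      by_contra hne
      have := hbetween (onePos gs (a + 1)) (hmono a.lt_add_one) (hmono (by omega))
      rw [(getD_ofGaps_eq_true_iff _ _).2 ⟨a + 1, by omega, rfl⟩] at this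
      exact Bool.noConfusion this
    have := H a hb
    rw [onePos_succ ha]
    omega

def gapBound (d k r ν j : ℕ) : Finset ℕ := if j + 1 = ν then range (r + 1) else Icc d k

theorem internalOK_ofGaps_and_trailZeros_le_iff (d k r : ℕ) (gs : List ℕ) :
    internalOK d k (ofGaps gs) ∧ trailZeros (ofGaps gs) ≤ r ↔
      ∀ j (hj : j < gs.length), gs[j] ∈ gapBound d k r gs.length j := by
  rw [internalOK_ofGaps_iff, trailZeros_ofGaps]
  rcases gs.eq_nil_or_concat with rfl | ⟨gs, t, rfl⟩
  · simp
  constructor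
  · rintro ⟨hint, htrail⟩ j hj
    by_cases hlast : j = gs.length
    · subst hlast
      simpa [gapBound, Nat.lt_succ_iff] using htrail
    · simpa [gapBound, hlast] using hint j (by simp at hj ⊢; omega)
  · intro H
    refine ⟨fun j hj => ?_, ?_⟩
    · simpa [gapBound, show j ≠ gs.length by simp at hj; omega] using H j (by omega)
    · simpa [gapBound, Nat.lt_succ_iff] using H gs.length (by simp)

def gapVectors (d k r ν n : ℕ) : Finset (Fin ν → ℕ) :=
  {p ∈ Fintype.piFinset (fun i : Fin ν => gapBound d k r ν i) | ν + ∑ i, p i = n}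

theorem ofGaps_ofFn_admissible_iff (d k r n : ℕ) {ν : ℕ} (p : Fin ν → ℕ) :
    (ofGaps (List.ofFn p)).length = n ∧ internalOK d k (ofGaps (List.ofFn p)) ∧
      trailZeros (ofGaps (List.ofFn p)) ≤ r ↔ p ∈ gapVectors d k r ν n := by
  simp only [gapVectors, mem_filter, Fintype.mem_piFinset, length_ofGaps,
    internalOK_ofGaps_and_trailZeros_le_iff, List.length_ofFn, List.sum_ofFn, List.getElem_ofFn,
    Fin.forall_iff]
  tauto

theorem Adkr_eq_card_gapVectors (d k r n : ℕ) {ν : ℕ} (hν : 1 ≤ ν) :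
    Adkr d k r n ν = #(gapVectors d k r ν n) := by
  have hset : {l : List Bool | l.length = n ∧ (l ≠ [] → l.head? = some true) ∧
      internalOK d k l ∧ trailZeros l ≤ r ∧ wt l = ν} =
        (ofGaps ∘ List.ofFn) '' (gapVectors d k r ν n : Set (Fin ν → ℕ)) := by
    ext l
    simp only [Set.mem_ofPred_eq, Set.mem_image, mem_coe, Function.comp_apply]
    constructor
    · rintro ⟨hlen, hhead, hint, htrail, hwt⟩
      obtain ⟨gs, rfl⟩ := exists_ofGaps_eq l hhead
      rw [wt_ofGaps] at hwt
      obtain ⟨p, rfl⟩ : ∃ p : Fin ν → ℕ, List.ofFn p = gs := by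
        subst hwt
        exact ⟨_, List.ofFn_getElem⟩
      exact ⟨p, (ofGaps_ofFn_admissible_iff d k r n p).1 ⟨hlen, hint, htrail⟩, rfl⟩
    · rintro ⟨p, hp, rfl⟩
      obtain ⟨hlen, hint, htrail⟩ := (ofGaps_ofFn_admissible_iff d k r n p).2 hp
      refine ⟨hlen, fun _ => ?_, hint, htrail, by rw [wt_ofGaps, List.length_ofFn]⟩
      obtain ⟨m, rfl⟩ := Nat.exists_eq_add_of_le' hν
      simp [List.ofFn_succ]
  rw [Adkr, ← Set.coe_ofPred, hset,
    Nat.card_image_of_injective (ofGaps_injective.comp List.ofFn_injective)]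
  exact Nat.card_eq_finsetCard _

open PowerSeries in
theorem stmt9 (d k r : ℕ) (hk : d ≤ k) (ν : ℕ) (hν : 1 ≤ ν) :
    PowerSeries.mk (fun n => (Adkr d k r n ν : ℚ)) =
      (X : PowerSeries ℚ) ^ (ν - 1) * ((1 - X)⁻¹) ^ ν * X ^ (1 + (ν - 1) * d) *
        (1 - X ^ (r + 1)) * (1 - X ^ (k - d + 1)) ^ (ν - 1) := by
  obtain ⟨m, rfl⟩ := Nat.exists_eq_add_of_le' hν
  simp only [Adkr_eq_card_gapVectors d k r _ hν, gapVectors, mk_card_filter_piFinset_eq,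
    Fin.prod_univ_castSucc, gapBound, Fin.val_last, Fin.val_castSucc, add_left_inj,
    fun i : Fin m => i.isLt.ne, if_true, if_false, prod_const, card_univ, Fintype.card_fin,
    sum_Icc_pow_eq_pow_mul_sum_range _ hk, Nat.add_sub_cancel]
  rw [mul_pow, geom_sum_X_eq, geom_sum_X_eq, mul_pow]
  ring
end

section
/- Define A_δ^m = Σ_{j=0}^m (-1)^j C(m,j) [ C(δ/2+m-j-(m-j)(d+1)-j(k+1), m) - C(δ/2+m-j-1-(m-j)(d+1)-j(k+1), m) ] for even δ ≥ 0. Then Σ_{i=d+1}^{k+1} A_{δ-i}^m = A_δ^{m+1} (where A_{δ-i}^m is given by the same formula with δ/2 replaced by (δ-i)/2, interpreting the sum over i appropriately as an index shift). -/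
/-- `A_δ^m` of the paper, written in terms of the half-index `s = δ/2`. -/
def Ahalf (d k : ℕ) (s : ℤ) (m : ℕ) : ℤ :=
  ∑ j ∈ Finset.range (m + 1), (-1 : ℤ) ^ j * (m.choose j) *
    (ibin (s + m - j - ((m - j : ℕ) : ℤ) * (d + 1) - j * (k + 1)) m -
     ibin (s + m - j - 1 - ((m - j : ℕ) : ℤ) * (d + 1) - j * (k + 1)) m)

lemma ibin_pascal (a : ℤ) (m : ℕ) :
    ibin a (m+1) - ibin (a-1) (m+1) = ibin (a-1) m := by
  unfold ibin
  rcases lt_trichotomy a 0 with h | h | h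
  · rw [if_neg (by omega), if_neg (by omega), if_neg (by omega)]; ring
  · subst h; norm_num [Nat.choose_eq_zero_of_lt]
  · rw [if_pos (by omega), if_pos (by omega), if_pos (by omega)]
    have ha : a.toNat = (a-1).toNat + 1 := by omega
    rw [ha, Nat.choose_succ_succ]
    push_cast; ring

lemma tele (G : ℤ → ℤ) (d k : ℕ) (hk : d ≤ k) (t : ℤ) :
    ∑ i ∈ Finset.Icc (d+1) (k+1), (G (t - i) - G (t - i - 1)) =
      G (t - (d+1)) - G (t - (k+2)) := by
  induction k with
  | zero =>
    interval_cases d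
    simp only [Finset.Icc_self, Finset.sum_singleton]
    norm_num; ring_nf
  | succ n ih =>
    rcases Nat.lt_or_ge d (n+1) with h | h
    · have hd : d ≤ n := by omega
      rw [Finset.sum_Icc_succ_top (by omega), ih hd]
      push_cast; ring_nf
    · have : d = n + 1 := by omega
      subst this
      simp only [Finset.Icc_self, Finset.sum_singleton]
      push_cast; ring_nf

lemma sum_pascal (V : ℕ → ℤ) (m : ℕ) :
    ∑ j ∈ Finset.range (m+1), (-1:ℤ)^j * (m.choose j) * (V j - V (j+1)) =
    ∑ j ∈ Finset.range (m+2), (-1:ℤ)^j * ((m+1).choose j) * V j := by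
  have hL : ∑ j ∈ Finset.range (m+1), (-1:ℤ)^j * (m.choose j) * (V j - V (j+1)) =
      (∑ j ∈ Finset.range (m+1), (-1:ℤ)^j * (m.choose j) * V j) -
      (∑ j ∈ Finset.range (m+1), (-1:ℤ)^j * (m.choose j) * V (j+1)) := by
    rw [← Finset.sum_sub_distrib]; apply Finset.sum_congr rfl; intro j _; ring
  rw [hL, Finset.sum_range_succ' (fun j => (-1:ℤ)^j * ((m+1).choose j) * V j)]
  have hR : ∑ j ∈ Finset.range (m+1), (-1:ℤ)^(j+1) * ((m+1).choose (j+1)) * V (j+1) =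
      (∑ j ∈ Finset.range (m+1), (-1:ℤ)^(j+1) * (m.choose (j+1)) * V (j+1)) -
      (∑ j ∈ Finset.range (m+1), (-1:ℤ)^j * (m.choose j) * V (j+1)) := by
    rw [← Finset.sum_sub_distrib]; apply Finset.sum_congr rfl; intro j _
    rw [Nat.choose_succ_succ]; push_cast; ring
  rw [hR]
  have hS1 : ∑ j ∈ Finset.range (m+1), (-1:ℤ)^j * (m.choose j) * V j =
      (∑ j ∈ Finset.range (m+1), (-1:ℤ)^(j+1) * (m.choose (j+1)) * V (j+1)) + V 0 := by
    rw [Finset.sum_range_succ' (fun j => (-1:ℤ)^j * (m.choose j) * V j)]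
    rw [Finset.sum_range_succ (fun j => (-1:ℤ)^(j+1) * (m.choose (j+1)) * V (j+1))]
    simp [Nat.choose_succ_self]
  rw [hS1]; simp [Nat.choose_zero_right]; ring

theorem stmt12 (d k : ℕ) (hk : d ≤ k) (s : ℤ) (m : ℕ) :
    ∑ i ∈ Finset.Icc (d + 1) (k + 1), Ahalf d k (s - i) m = Ahalf d k s (m + 1) := by
  set V : ℕ → ℤ := fun j =>
    ibin (s + m - j - ((m + 1 - j : ℕ) : ℤ) * (d + 1) - j * (k + 1)) m with hV
  have hL : ∑ i ∈ Finset.Icc (d + 1) (k + 1), Ahalf d k (s - i) m =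
      ∑ j ∈ Finset.range (m+1), (-1:ℤ)^j * (m.choose j) * (V j - V (j+1)) := by
    unfold Ahalf
    rw [Finset.sum_comm]
    apply Finset.sum_congr rfl
    intro j hj
    have hjm : j ≤ m := Nat.lt_succ_iff.mp (Finset.mem_range.mp hj)
    rw [← Finset.mul_sum]
    congr 1
    have step : ∑ i ∈ Finset.Icc (d+1) (k+1),
        (ibin ((s - i) + m - j - ((m - j : ℕ) : ℤ) * (d + 1) - j * (k + 1)) m -
         ibin ((s - i) + m - j - 1 - ((m - j : ℕ) : ℤ) * (d + 1) - j * (k + 1)) m) =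
        ∑ i ∈ Finset.Icc (d+1) (k+1),
        ((fun a => ibin a m) ((s + m - j - ((m - j : ℕ) : ℤ) * (d + 1) - j * (k + 1)) - i) -
         (fun a => ibin a m) ((s + m - j - ((m - j : ℕ) : ℤ) * (d + 1) - j * (k + 1)) - i - 1)) := by
      apply Finset.sum_congr rfl; intro i _
      congr 2 <;> ring
    rw [step, tele (fun a => ibin a m) d k hk]
    have c1 : ((m + 1 - j : ℕ) : ℤ) = ((m - j : ℕ) : ℤ) + 1 := by omega
    have c2 : ((m + 1 - (j+1) : ℕ) : ℤ) = ((m - j : ℕ) : ℤ) := by omega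
    simp only [hV, c1, c2]
    congr 2 <;> push_cast <;> ring
  have hR : Ahalf d k s (m + 1) =
      ∑ j ∈ Finset.range (m+2), (-1:ℤ)^j * ((m+1).choose j) * V j := by
    unfold Ahalf
    apply Finset.sum_congr rfl
    intro j hj
    congr 1
    have e1 : s + ((m+1 : ℕ) : ℤ) - j - 1 - ((m + 1 - j : ℕ) : ℤ) * (d + 1) - j * (k + 1) =
        (s + ((m+1 : ℕ) : ℤ) - j - ((m + 1 - j : ℕ) : ℤ) * (d + 1) - j * (k + 1)) - 1 := by ring
    rw [e1, ibin_pascal]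
    simp only [hV]
    congr 1
    push_cast; ring
  rw [hL, hR]
  exact sum_pascal V m
end

section
/- Let Ĉ_n^σ(d,k,l,r) denote the number of (d,k,l,r)-constrained binary sequences of length n with NRZI charge σ. Then for σ ≠ n, Ĉ_n^σ = Σ_{j=0}^{min(n,l)} C_{n-j}^{σ-j}, where C_m^τ counts (d,k,r)-sequences of length m beginning with a one with charge τ; and for σ = n, Ĉ_n^n = 1 if n ≤ min(l,r) and 0 otherwise. -/
/-! A sequence with `j` leading zeros is `0^j ++ l` with `l` empty or beginning with a one. The
leading zeros keep the NRZI level at `+1`, so they add `j` to the charge, and they neither touch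
the internal runs nor (when `l` contains a one) the trailing run; cutting them off is therefore a
bijection onto the pairs counted on the right-hand side. If `l` is empty the charge is `n`; since
`|charge x| ≤ length x`, charge `n` forces `x = 0^n`, which is admissible iff `n ≤ min L r`. -/

open List

section Charge

lemma chargeAux_eq_mul_charge (z : ℤ) (l : List Bool) : chargeAux z l = z * charge l := by
  induction l generalizing z with
  | nil => simp [chargeAux, charge]
  | cons b t ih =>
    simp only [charge, chargeAux, ih (if b then -z else z), ih (if b then -1 else 1)]
    cases b <;> simp only [Bool.false_eq_true, if_false, if_true] <;> ring

@[simp]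
lemma charge_cons_false (l : List Bool) : charge (false :: l) = 1 + charge l := by
  simp [charge, chargeAux]

@[simp]
lemma charge_cons_true (l : List Bool) : charge (true :: l) = -(1 + charge l) := by
  rw [charge, chargeAux, if_pos rfl, chargeAux_eq_mul_charge, charge]
  ring

lemma charge_replicate_false_append (j : ℕ) (l : List Bool) :
    charge (replicate j false ++ l) = j + charge l := by
  induction j with
  | zero => simp
  | succ j ih => rw [replicate_succ, cons_append, charge_cons_false, ih]; push_cast; ring

lemma charge_replicate_false (n : ℕ) : charge (replicate n false) = n := by
  simpa [charge, chargeAux] using charge_replicate_false_append n []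

lemma abs_charge_le_length (l : List Bool) : |charge l| ≤ l.length := by
  induction l with
  | nil => simp [charge, chargeAux]
  | cons b t ih =>
    rw [abs_le] at ih ⊢
    cases b <;> simp only [charge_cons_false, charge_cons_true, length_cons] <;> push_cast <;>
      constructor <;> linarith

lemma eq_replicate_of_charge_eq_length {l : List Bool} (h : charge l = l.length) :
    l = replicate l.length false := by
  induction l with
  | nil => rfl
  | cons b t ih =>
    have := abs_le.mp (abs_charge_le_length t)
    cases b
    · simp only [charge_cons_false, length_cons] at h
      push_cast at h
      rw [length_cons, replicate_succ, ← ih (by linarith)]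
    · simp only [charge_cons_true, length_cons] at h
      push_cast at h
      linarith

end Charge

section LeadingZeros

@[simp]
lemma leadZeros_nil : leadZeros [] = 0 := rfl

@[simp]
lemma leadZeros_cons_false (l : List Bool) : leadZeros (false :: l) = leadZeros l + 1 := by
  simp [leadZeros]

@[simp]
lemma leadZeros_cons_true (l : List Bool) : leadZeros (true :: l) = 0 := by
  simp [leadZeros]

lemma leadZeros_le_length (x : List Bool) : leadZeros x ≤ x.length :=
  (takeWhile_sublist _).length_le

lemma leadZeros_replicate_false_append (j : ℕ) {l : List Bool}
    (hl : l ≠ [] → l.head? = some true) : leadZeros (replicate j false ++ l) = j := by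
  induction j with
  | zero =>
    cases l with
    | nil => rfl
    | cons b t => simp_all
  | succ j ih => simp [replicate_succ, ih]

lemma leadZeros_replicate_false (n : ℕ) : leadZeros (replicate n false) = n := by
  simpa using leadZeros_replicate_false_append n (l := []) (by simp)

lemma leadZeros_le_leadZeros_append (a b : List Bool) : leadZeros a ≤ leadZeros (a ++ b) := by
  induction a with
  | nil => simp
  | cons x t ih => cases x <;> simp [ih]

lemma leadZeros_append_of_true_mem {a : List Bool} (h : true ∈ a) (b : List Bool) :
    leadZeros (a ++ b) = leadZeros a := by
  induction a with
  | nil => simp at h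
  | cons x t ih => cases x <;> simp_all

lemma replicate_leadZeros_append_drop (x : List Bool) :
    replicate (leadZeros x) false ++ x.drop (leadZeros x) = x := by
  induction x with
  | nil => rfl
  | cons b t ih => cases b <;> simp [replicate_succ, ih]

lemma head?_drop_leadZeros (x : List Bool) :
    x.drop (leadZeros x) ≠ [] → (x.drop (leadZeros x)).head? = some true := by
  induction x with
  | nil => simp
  | cons b t ih =>
    cases b
    · simpa using ih
    · simp

end LeadingZeros

lemma trailZeros_le_trailZeros_replicate_false_append (j : ℕ) (l : List Bool) :
    trailZeros l ≤ trailZeros (replicate j false ++ l) := by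
  show leadZeros l.reverse ≤ leadZeros (replicate j false ++ l).reverse
  rw [reverse_append, reverse_replicate]
  exact leadZeros_le_leadZeros_append _ _

lemma trailZeros_replicate_false (n : ℕ) : trailZeros (replicate n false) = n := by
  show leadZeros (replicate n false).reverse = n
  rw [reverse_replicate, leadZeros_replicate_false]

lemma trailZeros_replicate_false_append {l : List Bool} (h : true ∈ l) (j : ℕ) :
    trailZeros (replicate j false ++ l) = trailZeros l := by
  show leadZeros (replicate j false ++ l).reverse = leadZeros l.reverse
  rw [reverse_append, reverse_replicate]
  exact leadZeros_append_of_true_mem (mem_reverse.mpr h) _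

lemma internalOK_cons_false_iff (d k : ℕ) (l : List Bool) :
    internalOK d k (false :: l) ↔ internalOK d k l := by
  constructor
  · intro H i j hij hj hi hj' hgap
    have := H (i + 1) (j + 1) (by omega) (by simpa using hj) (by simpa using hi)
      (by simpa using hj')
      (fun m hm hm' => by
        obtain _ | m := m
        · omega
        simpa using hgap m (by omega) (by omega))
    omega
  · intro H i j hij hj hi hj' hgap
    obtain _ | i := i
    · simp at hi
    obtain _ | j := j
    · omega
    have := H i j (by omega) (by simpa using hj) (by simpa using hi) (by simpa using hj')
      (fun m hm hm' => by simpa using hgap (m + 1) (by omega) (by omega))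
    omega

lemma internalOK_replicate_false_append (d k j : ℕ) (l : List Bool) :
    internalOK d k (replicate j false ++ l) ↔ internalOK d k l := by
  induction j with
  | zero => rfl
  | succ j ih => rw [replicate_succ, cons_append, internalOK_cons_false_iff, ih]

lemma internalOK_replicate_false (d k n : ℕ) : internalOK d k (replicate n false) := by
  simpa using (internalOK_replicate_false_append d k n []).mpr fun _ _ _ hj => by simp at hj

instance finite_subtype_length_eq (n : ℕ) (P : List Bool → Prop) :
    Finite {l : List Bool // l.length = n ∧ P l} :=
  ((List.finite_length_eq Bool n).subset fun _ hl => hl.1).to_subtype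

lemma admissible_with_charge_length_iff (d k L r n : ℕ) (x : List Bool) :
    (x.length = n ∧ leadZeros x ≤ L ∧ internalOK d k x ∧ trailZeros x ≤ r ∧
      charge x = n) ↔ x = replicate n false ∧ n ≤ min L r := by
  constructor
  · rintro ⟨rfl, hL, -, hr, hσ⟩
    have hx := eq_replicate_of_charge_eq_length hσ
    rw [hx, leadZeros_replicate_false] at hL
    rw [hx, trailZeros_replicate_false] at hr
    exact ⟨hx, le_min hL hr⟩
  · rintro ⟨rfl, hn⟩
    exact ⟨length_replicate .., (leadZeros_replicate_false n).trans_le (le_of_le_min_left hn),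
      internalOK_replicate_false d k n,
      (trailZeros_replicate_false n).trans_le (le_of_le_min_right hn), charge_replicate_false n⟩

section DropLeadZeros

variable {d k L r n : ℕ} {σ : ℤ}

lemma drop_leadZeros_spec {x : List Bool}
    (hx : x.length = n ∧ leadZeros x ≤ L ∧ internalOK d k x ∧ trailZeros x ≤ r ∧
      charge x = σ) :
    leadZeros x < min n L + 1 ∧
      ((x.drop (leadZeros x)).length = n - leadZeros x ∧
        (x.drop (leadZeros x) ≠ [] → (x.drop (leadZeros x)).head? = some true) ∧
        internalOK d k (x.drop (leadZeros x)) ∧ trailZeros (x.drop (leadZeros x)) ≤ r ∧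
        charge (x.drop (leadZeros x)) = σ - leadZeros x) := by
  obtain ⟨rfl, hL, hok, htr, rfl⟩ := hx
  have hsplit := replicate_leadZeros_append_drop x
  refine ⟨Nat.lt_succ_of_le (le_min (leadZeros_le_length x) hL), length_drop ..,
    head?_drop_leadZeros x, ?_, ?_, ?_⟩
  · rwa [← internalOK_replicate_false_append d k (leadZeros x), hsplit]
  · exact (trailZeros_le_trailZeros_replicate_false_append _ _).trans (hsplit ▸ htr)
  · have := charge_replicate_false_append (leadZeros x) (x.drop (leadZeros x))
    rw [hsplit] at this
    linarith

lemma replicate_false_append_spec (hσ : σ ≠ n) {j : ℕ} (hj : j < min n L + 1) {l : List Bool}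
    (hl : l.length = n - j ∧ (l ≠ [] → l.head? = some true) ∧ internalOK d k l ∧
      trailZeros l ≤ r ∧ charge l = σ - j) :
    (replicate j false ++ l).length = n ∧ leadZeros (replicate j false ++ l) ≤ L ∧
      internalOK d k (replicate j false ++ l) ∧ trailZeros (replicate j false ++ l) ≤ r ∧
      charge (replicate j false ++ l) = σ := by
  obtain ⟨hlen, hhead, hok, htr, hcharge⟩ := hl
  have hjn : j ≤ n := by omega
  -- `l = []` would force `j = n` and `σ = j`
  have hne : l ≠ [] := by
    rintro rfl
    simp only [length_nil, charge, chargeAux] at hlen hcharge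
    omega
  refine ⟨by simp [hlen, hjn], (leadZeros_replicate_false_append j hhead).trans_le (by omega),
    (internalOK_replicate_false_append d k j l).mpr hok, ?_, ?_⟩
  · rwa [trailZeros_replicate_false_append (mem_of_mem_head? (hhead hne))]
  · rw [charge_replicate_false_append, hcharge]
    ring

variable (d k L r n)

def dropLeadZerosEquiv (hσ : σ ≠ n) :
    {x : List Bool // x.length = n ∧ leadZeros x ≤ L ∧ internalOK d k x ∧
      trailZeros x ≤ r ∧ charge x = σ} ≃
    Σ j : Fin (min n L + 1), {l : List Bool // l.length = n - j ∧
      (l ≠ [] → l.head? = some true) ∧ internalOK d k l ∧ trailZeros l ≤ r ∧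
      charge l = σ - j} where
  toFun x := ⟨⟨_, (drop_leadZeros_spec x.2).1⟩, _, (drop_leadZeros_spec x.2).2⟩
  invFun s := ⟨_, replicate_false_append_spec hσ s.1.2 s.2.2⟩
  left_inv x := Subtype.ext (replicate_leadZeros_append_drop x.1)
  right_inv s := by
    have hlead := leadZeros_replicate_false_append s.1 s.2.2.2.1
    refine Sigma.subtype_ext (Fin.ext hlead) ?_
    simp only [hlead]
    exact drop_left' (length_replicate ..)

end DropLeadZeros

theorem stmt19_general (d k L r n : ℕ) :
    (∀ σ : ℤ, σ ≠ (n : ℤ) →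
      Cdklr d k L r n σ =
        ∑ j ∈ Finset.range (min n L + 1), Cdkr d k r (n - j) (σ - (j : ℤ))) ∧
    Cdklr d k L r n (n : ℤ) = if n ≤ min L r then 1 else 0 := by
  refine ⟨fun σ hσ => ?_, ?_⟩
  · rw [Cdklr, Nat.card_congr (dropLeadZerosEquiv d k L r n hσ), Nat.card_sigma,
      ← Fin.sum_univ_eq_sum_range]
    rfl
  · rw [Cdklr,
      Nat.card_congr (Equiv.subtypeEquivRight (admissible_with_charge_length_iff d k L r n))]
    split_ifs with h <;> simp [h]

theorem stmt19 (d k L r n : ℕ) (hk : d ≤ k) :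
    (∀ σ : ℤ, σ ≠ (n : ℤ) →
      Cdklr d k L r n σ =
        ∑ j ∈ Finset.range (min n L + 1), Cdkr d k r (n - j) (σ - (j : ℤ))) ∧
    Cdklr d k L r n (n : ℤ) = if n ≤ min L r then 1 else 0 :=
  stmt19_general d k L r n
end
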